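/- Let X, Y, U be random variables on finite alphabets with joint pmf P. Then ρ_m(X;Y|U) = max over u with P_U(u) > 0 of ρ_m(X;Y | U = u), where ρ_m(X;Y | U = u) denotes the (unconditional) maximal correlation of X and Y computed under the conditional distribution P_{XY|U=u}. -/

import Mathlib

open scoped BigOperators Classical

noncomputable section

namespace GCI

/-- A bundled finite alphabet. -/
structure FinAlph : Type 1 where
  carrier : Type
  [fin : Fintype carrier]

instance : CoeSort FinAlph Type := ⟨FinAlph.carrier⟩
instance (A : FinAlph) : Fintype A := A.fin

variable {Ω : Type} [Fintype Ω]

/-- `p` is a probability mass function on the finite sample space `Ω`. -/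
def IsPMF (p : Ω → ℝ) : Prop := (∀ ω, 0 ≤ p ω) ∧ ∑ ω, p ω = 1

/-- Expectation of a real random variable `f` under the pmf `p`. -/
def expec (p : Ω → ℝ) (f : Ω → ℝ) : ℝ := ∑ ω, p ω * f ω

/-- Marginal pmf of the random variable `X` under `p`. -/
def marg {𝒳 : Type} (p : Ω → ℝ) (X : Ω → 𝒳) (x : 𝒳) : ℝ :=
  ∑ ω, if X ω = x then p ω else 0

/-- Conditional expectation `E[f | U = u]`. -/
def cexp {𝒰 : Type} (p : Ω → ℝ) (U : Ω → 𝒰) (u : 𝒰) (f : Ω → ℝ) : ℝ :=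
  (∑ ω, if U ω = u then p ω * f ω else 0) / marg p U u

/-- `E[cov(f, g | U)]`. -/
def ccov {𝒰 : Type} (p : Ω → ℝ) (U : Ω → 𝒰) (f g : Ω → ℝ) : ℝ :=
  expec p fun ω => (f ω - cexp p U (U ω) f) * (g ω - cexp p U (U ω) g)

/-- `E[var(f | U)]`. -/
def cvar {𝒰 : Type} (p : Ω → ℝ) (U : Ω → 𝒰) (f : Ω → ℝ) : ℝ := ccov p U f f

/-- Conditional Pearson correlation `ρ(f; g | U)`. -/
def ccorr {𝒰 : Type} (p : Ω → ℝ) (U : Ω → 𝒰) (f g : Ω → ℝ) : ℝ :=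
  if 0 < cvar p U f * cvar p U g then
    ccov p U f g / (Real.sqrt (cvar p U f) * Real.sqrt (cvar p U g))
  else 0

/-- Conditional correlation ratio `θ(X; Y | U)` for a real-valued `X`. -/
def cratio {𝒴 𝒰 : Type} (p : Ω → ℝ) (U : Ω → 𝒰) (X : Ω → ℝ) (Y : Ω → 𝒴) : ℝ :=
  ⨆ g : 𝒴 × 𝒰 → ℝ, ccorr p U X fun ω => g (Y ω, U ω)

/-- Conditional maximal correlation `ρ_m(X; Y | U)`. -/
def maxCorr {𝒳 𝒴 𝒰 : Type} (p : Ω → ℝ) (U : Ω → 𝒰) (X : Ω → 𝒳) (Y : Ω → 𝒴) : ℝ :=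
  ⨆ f : 𝒳 × 𝒰 → ℝ, ⨆ g : 𝒴 × 𝒰 → ℝ,
    ccorr p U (fun ω => f (X ω, U ω)) fun ω => g (Y ω, U ω)

/-- Unconditional Pearson correlation. -/
def corr0 (p : Ω → ℝ) (f g : Ω → ℝ) : ℝ := ccorr p (fun _ => ()) f g

/-- Unconditional correlation ratio `θ(X;Y)`. -/
def ratio0 {𝒴 : Type} (p : Ω → ℝ) (X : Ω → ℝ) (Y : Ω → 𝒴) : ℝ :=
  cratio p (fun _ => ()) X Y

/-- Unconditional maximal correlation `ρ_m(X;Y)`. -/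
def maxCorr0 {𝒳 𝒴 : Type} (p : Ω → ℝ) (X : Ω → 𝒳) (Y : Ω → 𝒴) : ℝ :=
  maxCorr p (fun _ => ()) X Y

/-- Shannon entropy (base 2) of the random variable `X` under `p`. -/
def ent {𝒳 : Type} [Fintype 𝒳] (p : Ω → ℝ) (X : Ω → 𝒳) : ℝ :=
  ∑ x, -(marg p X x * Real.logb 2 (marg p X x))

/-- Conditional Shannon entropy `H(X | U)`. -/
def condEnt {𝒳 𝒰 : Type} [Fintype 𝒳] [Fintype 𝒰] (p : Ω → ℝ) (X : Ω → 𝒳) (U : Ω → 𝒰) : ℝ :=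
  ent p (fun ω => (X ω, U ω)) - ent p U

/-- Mutual information `I(X; U)`. -/
def mutInfo {𝒳 𝒰 : Type} [Fintype 𝒳] [Fintype 𝒰] (p : Ω → ℝ) (X : Ω → 𝒳) (U : Ω → 𝒰) : ℝ :=
  ent p X + ent p U - ent p fun ω => (X ω, U ω)

/-- Almost-sure equality of two discrete random variables. -/
def AEEq {𝒱 : Type} (p : Ω → ℝ) (f g : Ω → 𝒱) : Prop := ∀ ω, 0 < p ω → f ω = g ω

/-- The Gács–Körner common information `C_GK(X;Y)`. -/
def CGK {𝒳 𝒴 : Type} (p : Ω → ℝ) (X : Ω → 𝒳) (Y : Ω → 𝒴) : ℝ :=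
  sSup { r | ∃ (𝒱 : FinAlph) (f : 𝒳 → 𝒱) (g : 𝒴 → 𝒱),
    AEEq p (fun ω => f (X ω)) (fun ω => g (Y ω)) ∧ r = ent p fun ω => f (X ω) }

/-- The conditional Gács–Körner common information `C_GK(X;Y|U)`. -/
def CGKcond {𝒳 𝒴 𝒰 : Type} [Fintype 𝒰] (p : Ω → ℝ) (X : Ω → 𝒳) (Y : Ω → 𝒴)
    (U : Ω → 𝒰) : ℝ :=
  sSup { r | ∃ (𝒱 : FinAlph) (f : 𝒳 × 𝒰 → 𝒱) (g : 𝒴 × 𝒰 → 𝒱),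
    AEEq p (fun ω => f (X ω, U ω)) (fun ω => g (Y ω, U ω)) ∧
    r = condEnt p (fun ω => f (X ω, U ω)) U }

/-- The `β`-approximate common information (approximate information-correlation function). -/
def Cbeta {𝒳 𝒴 : Type} [Fintype 𝒳] [Fintype 𝒴] (p : 𝒳 × 𝒴 → ℝ) (β : ℝ) : ℝ :=
  sInf { r | ∃ (𝒰 : FinAlph) (q : (𝒳 × 𝒴) × 𝒰 → ℝ),
    IsPMF q ∧ (∀ a, marg q Prod.fst a = p a) ∧
    maxCorr q Prod.snd (fun a => a.1.1) (fun a => a.1.2) ≤ β ∧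
    r = mutInfo q Prod.fst Prod.snd }

/-- The `n`-th term in the definition of the `β`-exact common information:
the normalized smallest entropy of an auxiliary variable for `n` i.i.d. copies. -/
def KbetaN {𝒳 𝒴 : Type} [Fintype 𝒳] [Fintype 𝒴] (p : 𝒳 × 𝒴 → ℝ) (β : ℝ) (n : ℕ) : ℝ :=
  sInf { r | ∃ (𝒰 : FinAlph) (q : ((Fin n → 𝒳) × (Fin n → 𝒴)) × 𝒰 → ℝ),
    IsPMF q ∧
    (∀ a : (Fin n → 𝒳) × (Fin n → 𝒴), marg q Prod.fst a = ∏ i, p (a.1 i, a.2 i)) ∧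
    maxCorr q Prod.snd (fun a => a.1.1) (fun a => a.1.2) ≤ β ∧
    r = (1 / (n : ℝ)) * ent q Prod.snd }

/-- The `β`-exact common information (exact information-correlation function). -/
def Kbeta {𝒳 𝒴 : Type} [Fintype 𝒳] [Fintype 𝒴] (p : 𝒳 × 𝒴 → ℝ) (β : ℝ) : ℝ :=
  Filter.limUnder Filter.atTop fun n => KbetaN p β n


/-- The pmf on `Ω` obtained by conditioning `p` on the event `U = u`. -/
def condPMF {𝒰 : Type} (p : Ω → ℝ) (U : Ω → 𝒰) (u : 𝒰) : Ω → ℝ :=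
  fun ω => (if U ω = u then p ω else 0) / marg p U u


/-!
Averaging over `U` splits the conditional covariance and variances as
`E[cov(f, g | U)] = ∑ᵤ P_U(u) cov_u(f, g)` and `E[var(f | U)] = ∑ᵤ P_U(u) var_u(f)`, where
`cov_u`, `var_u` are taken under `P_{·|U=u}`. On each slice `cov_u(f, g) ≤ ρ_u √var_u(f) √var_u(g)`
with `ρ_u = ρ_m(X;Y|U=u)`, so the Cauchy–Schwarz inequality for the weights `P_U(u)` bounds
`ρ(f;g|U)` by `maxᵤ ρ_u`. Conversely, functions supported on the slice `U = u` have conditional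
correlation given `U` equal to their correlation under `P_{·|U=u}`, so every `ρ_u` is attained.
-/

section Covariance

variable {𝒰 : Type} {p : Ω → ℝ} {U : Ω → 𝒰} {f f' g g' : Ω → ℝ}

lemma cvar_nonneg (hp : ∀ ω, 0 ≤ p ω) (U : Ω → 𝒰) (f : Ω → ℝ) : 0 ≤ cvar p U f :=
  Finset.sum_nonneg fun ω _ => mul_nonneg (hp ω) (mul_self_nonneg _)

lemma ccov_sq_le_cvar_mul_cvar (hp : ∀ ω, 0 ≤ p ω) (U : Ω → 𝒰) (f g : Ω → ℝ) :
    ccov p U f g ^ 2 ≤ cvar p U f * cvar p U g :=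
  Finset.sum_sq_le_sum_mul_sum_of_sq_le_mul _
    (fun ω _ => mul_nonneg (hp ω) (mul_self_nonneg _))
    (fun ω _ => mul_nonneg (hp ω) (mul_self_nonneg _)) (fun _ _ => le_of_eq (by ring))

lemma ccov_le_sqrt_mul_sqrt (hp : ∀ ω, 0 ≤ p ω) (U : Ω → 𝒰) (f g : Ω → ℝ) :
    ccov p U f g ≤ √(cvar p U f) * √(cvar p U g) := by
  rw [← Real.sqrt_mul (cvar_nonneg hp U f)]
  exact (le_abs_self _).trans (Real.abs_le_sqrt (ccov_sq_le_cvar_mul_cvar hp U f g))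

lemma ccorr_le_of_ccov_le (hp : ∀ ω, 0 ≤ p ω) {c : ℝ} (hc : 0 ≤ c)
    (h : ccov p U f g ≤ c * (√(cvar p U f) * √(cvar p U g))) : ccorr p U f g ≤ c := by
  unfold ccorr
  split_ifs with hpos
  · rwa [div_le_iff₀ (by rw [← Real.sqrt_mul (cvar_nonneg hp U f)]; exact Real.sqrt_pos.2 hpos)]
  · exact hc

lemma ccov_le_of_ccorr_le (hp : ∀ ω, 0 ≤ p ω) {c : ℝ} (hc : 0 ≤ c) (h : ccorr p U f g ≤ c) :
    ccov p U f g ≤ c * (√(cvar p U f) * √(cvar p U g)) := by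
  by_cases hpos : 0 < cvar p U f * cvar p U g
  · have hsqrt : 0 < √(cvar p U f) * √(cvar p U g) := by
      rw [← Real.sqrt_mul (cvar_nonneg hp U f)]; exact Real.sqrt_pos.2 hpos
    rwa [ccorr, if_pos hpos, div_le_iff₀ hsqrt] at h
  · calc ccov p U f g ≤ √(cvar p U f) * √(cvar p U g) := ccov_le_sqrt_mul_sqrt hp U f g
      _ = 0 := by rw [← Real.sqrt_mul (cvar_nonneg hp U f), Real.sqrt_eq_zero'.2 (not_lt.1 hpos)]
      _ ≤ c * (√(cvar p U f) * √(cvar p U g)) := by positivity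

lemma ccorr_le_one (hp : ∀ ω, 0 ≤ p ω) (U : Ω → 𝒰) (f g : Ω → ℝ) : ccorr p U f g ≤ 1 :=
  ccorr_le_of_ccov_le hp zero_le_one ((ccov_le_sqrt_mul_sqrt hp U f g).trans_eq (one_mul _).symm)

lemma ccorr_eq_of_ccov_eq_mul {𝒱 : Type} {q : Ω → ℝ} {V : Ω → 𝒱} {m : ℝ} (hm : 0 < m)
    (hfg : ccov p U f g = m * ccov q V f' g') (hf : cvar p U f = m * cvar q V f')
    (hg : cvar p U g = m * cvar q V g') : ccorr p U f g = ccorr q V f' g' := by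
  have hpos : 0 < m * cvar q V f' * (m * cvar q V g') ↔ 0 < cvar q V f' * cvar q V g' := by
    rw [mul_mul_mul_comm, mul_pos_iff_of_pos_left (mul_pos hm hm)]
  unfold ccorr
  rw [hfg, hf, hg, Real.sqrt_mul hm.le, Real.sqrt_mul hm.le, mul_mul_mul_comm √m,
    Real.mul_self_sqrt hm.le, mul_div_mul_left _ _ hm.ne']
  simp only [hpos]

lemma cexp_congr (U : Ω → 𝒰) (hf : ∀ ω, p ω ≠ 0 → f ω = f' ω) (u : 𝒰) :
    cexp p U u f = cexp p U u f' := by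
  unfold cexp
  congr 1
  refine Finset.sum_congr rfl fun ω _ => ?_
  by_cases hω : p ω = 0
  · simp [hω]
  · rw [hf ω hω]

lemma ccov_congr (U : Ω → 𝒰) (hf : ∀ ω, p ω ≠ 0 → f ω = f' ω)
    (hg : ∀ ω, p ω ≠ 0 → g ω = g' ω) : ccov p U f g = ccov p U f' g' := by
  refine Finset.sum_congr rfl fun ω _ => ?_
  by_cases hω : p ω = 0
  · simp [hω]
  · dsimp only
    rw [hf ω hω, hg ω hω, cexp_congr U hf, cexp_congr U hg]

lemma ccorr_congr (U : Ω → 𝒰) (hf : ∀ ω, p ω ≠ 0 → f ω = f' ω)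
    (hg : ∀ ω, p ω ≠ 0 → g ω = g' ω) : ccorr p U f g = ccorr p U f' g' := by
  unfold ccorr cvar
  rw [ccov_congr U hf hg, ccov_congr U hf hf, ccov_congr U hg hg]

lemma ccov_zero_left (p : Ω → ℝ) (U : Ω → 𝒰) (g : Ω → ℝ) : ccov p U (fun _ => 0) g = 0 := by
  simp [ccov, expec, cexp]

end Covariance

section Conditioning

variable {𝒰 : Type} {p : Ω → ℝ} {U : Ω → 𝒰} {u : 𝒰}

lemma marg_nonneg (hp : ∀ ω, 0 ≤ p ω) (U : Ω → 𝒰) (u : 𝒰) : 0 ≤ marg p U u :=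
  Finset.sum_nonneg fun ω _ => by split_ifs <;> simp [hp ω]

lemma condPMF_nonneg (hp : ∀ ω, 0 ≤ p ω) (U : Ω → 𝒰) (u : 𝒰) (ω : Ω) : 0 ≤ condPMF p U u ω :=
  div_nonneg (by split_ifs <;> simp [hp ω]) (marg_nonneg hp U u)

lemma eq_of_condPMF_ne_zero {ω : Ω} (h : condPMF p U u ω ≠ 0) : U ω = u := by
  by_contra hU
  exact h (by simp [condPMF, hU])

lemma marg_mul_condPMF (hp : ∀ ω, 0 ≤ p ω) (ω : Ω) :
    marg p U u * condPMF p U u ω = if U ω = u then p ω else 0 := by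
  rcases eq_or_ne (marg p U u) 0 with hm | hm
  · have hzero : ∀ ω, U ω = u → p ω = 0 := fun ω hω => by
      simpa [hω] using (Finset.sum_eq_zero_iff_of_nonneg fun ω _ => by
        split_ifs <;> simp [hp ω]).1 hm ω (Finset.mem_univ ω)
    split_ifs with hω <;> simp [hm, hzero ω, hω]
  · exact mul_div_cancel₀ _ hm

/-- Both sides vanish when `P_U(u) = 0`, because division by zero gives zero. -/
lemma cexp_condPMF (f : Ω → ℝ) :
    cexp (condPMF p U u) (fun _ => ()) () f = cexp p U u f := by
  rcases eq_or_ne (marg p U u) 0 with hm | hm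
  · simp [cexp, condPMF, hm]
  · have hmarg : marg (condPMF p U u) (fun _ => ()) () = 1 := by
      simp only [marg, condPMF, if_true, ← Finset.sum_div]
      exact div_self hm
    simp only [cexp, hmarg, if_true, div_one, condPMF, Finset.sum_div]
    refine Finset.sum_congr rfl fun ω _ => ?_
    split_ifs <;> ring

lemma ccov_eq_sum_marg_mul_ccov_condPMF [Fintype 𝒰] (hp : ∀ ω, 0 ≤ p ω) (f g : Ω → ℝ) :
    ccov p U f g = ∑ u, marg p U u * ccov (condPMF p U u) (fun _ => ()) f g := by
  simp only [ccov, expec, Finset.mul_sum, ← mul_assoc, marg_mul_condPMF hp, cexp_condPMF]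
  rw [Finset.sum_comm]
  refine Finset.sum_congr rfl fun ω _ => ?_
  simp

lemma ccov_ite_eq_marg_mul_ccov_condPMF [Fintype 𝒰] (hp : ∀ ω, 0 ≤ p ω) (u : 𝒰)
    (f g : Ω → ℝ) :
    ccov p U (fun ω => if U ω = u then f ω else 0) (fun ω => if U ω = u then g ω else 0) =
      marg p U u * ccov (condPMF p U u) (fun _ => ()) f g := by
  rw [ccov_eq_sum_marg_mul_ccov_condPMF hp, Finset.sum_eq_single u]
  · congr 1
    exact ccov_congr _ (fun ω hω => if_pos (eq_of_condPMF_ne_zero hω))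
      (fun ω hω => if_pos (eq_of_condPMF_ne_zero hω))
  · intro v _ hv
    rw [ccov_congr (f' := fun _ => 0) (g' := fun ω => if U ω = u then g ω else 0) _
      (fun ω hω => if_neg ((eq_of_condPMF_ne_zero hω).symm ▸ hv)) (fun _ _ => rfl),
      ccov_zero_left, mul_zero]
  · exact fun hu => absurd (Finset.mem_univ u) hu

end Conditioning

section MaximalCorrelation

variable {𝒳 𝒴 𝒰 : Type} {p : Ω → ℝ} {U : Ω → 𝒰} {X : Ω → 𝒳} {Y : Ω → 𝒴}

lemma ccorr_le_maxCorr (hp : ∀ ω, 0 ≤ p ω) (f : 𝒳 × 𝒰 → ℝ) (g : 𝒴 × 𝒰 → ℝ) :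
    ccorr p U (fun ω => f (X ω, U ω)) (fun ω => g (Y ω, U ω)) ≤ maxCorr p U X Y :=
  le_ciSup_of_le ⟨1, Set.forall_mem_range.2 fun _ => ciSup_le fun _ => ccorr_le_one hp _ _ _⟩ f
    (le_ciSup (f := fun g : 𝒴 × 𝒰 → ℝ => ccorr p U _ fun ω => g (Y ω, U ω))
      ⟨1, Set.forall_mem_range.2 fun _ => ccorr_le_one hp _ _ _⟩ g)

lemma maxCorr_le {c : ℝ}
    (h : ∀ (f : 𝒳 × 𝒰 → ℝ) (g : 𝒴 × 𝒰 → ℝ),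
      ccorr p U (fun ω => f (X ω, U ω)) (fun ω => g (Y ω, U ω)) ≤ c) :
    maxCorr p U X Y ≤ c :=
  ciSup_le fun f => ciSup_le fun g => h f g

lemma maxCorr_nonneg (hp : ∀ ω, 0 ≤ p ω) (U : Ω → 𝒰) (X : Ω → 𝒳) (Y : Ω → 𝒴) :
    0 ≤ maxCorr p U X Y := by
  simpa [ccorr, cvar, ccov_zero_left] using ccorr_le_maxCorr hp (U := U) (X := X) (Y := Y) 0 0

lemma ccov_condPMF_le_maxCorr0_mul (hp : ∀ ω, 0 ≤ p ω) (u : 𝒰) (f : 𝒳 × 𝒰 → ℝ)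
    (g : 𝒴 × 𝒰 → ℝ) :
    ccov (condPMF p U u) (fun _ => ()) (fun ω => f (X ω, U ω)) (fun ω => g (Y ω, U ω)) ≤
      maxCorr0 (condPMF p U u) X Y *
        (√(cvar (condPMF p U u) (fun _ => ()) fun ω => f (X ω, U ω)) *
          √(cvar (condPMF p U u) (fun _ => ()) fun ω => g (Y ω, U ω))) := by
  have hq := condPMF_nonneg hp U u
  refine ccov_le_of_ccorr_le hq (maxCorr_nonneg hq _ X Y) ?_
  rw [ccorr_congr (f' := fun ω => f (X ω, u)) (g' := fun ω => g (Y ω, u)) _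
    (fun ω hω => by rw [eq_of_condPMF_ne_zero hω]) (fun ω hω => by rw [eq_of_condPMF_ne_zero hω])]
  exact ccorr_le_maxCorr hq (fun xu => f (xu.1, u)) (fun yu => g (yu.1, u))

lemma maxCorr_le_of_maxCorr0_condPMF_le [Fintype 𝒰] (hp : ∀ ω, 0 ≤ p ω) {c : ℝ} (hc : 0 ≤ c)
    (h : ∀ u, 0 < marg p U u → maxCorr0 (condPMF p U u) X Y ≤ c) : maxCorr p U X Y ≤ c := by
  refine maxCorr_le fun f g => ccorr_le_of_ccov_le hp hc ?_
  set F : Ω → ℝ := fun ω => f (X ω, U ω)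
  set G : Ω → ℝ := fun ω => g (Y ω, U ω)
  set q := condPMF p U
  have hslice : ∀ u, marg p U u * ccov (q u) (fun _ => ()) F G ≤
      c * (√(marg p U u * cvar (q u) (fun _ => ()) F) *
        √(marg p U u * cvar (q u) (fun _ => ()) G)) := by
    intro u
    rcases (marg_nonneg hp U u).eq_or_lt with hm | hm
    · simp [← hm]
    calc marg p U u * ccov (q u) (fun _ => ()) F G
        ≤ marg p U u * (c * (√(cvar (q u) (fun _ => ()) F) * √(cvar (q u) (fun _ => ()) G))) := by
          gcongr
          exact (ccov_condPMF_le_maxCorr0_mul hp u f g).trans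
            (mul_le_mul_of_nonneg_right (h u hm) (by positivity))
      _ = _ := by
          rw [Real.sqrt_mul hm.le, Real.sqrt_mul hm.le, mul_mul_mul_comm √_,
            Real.mul_self_sqrt hm.le]
          ring
  have hF : ∀ u, 0 ≤ marg p U u * cvar (q u) (fun _ => ()) F := fun u =>
    mul_nonneg (marg_nonneg hp U u) (cvar_nonneg (condPMF_nonneg hp U u) _ F)
  have hG : ∀ u, 0 ≤ marg p U u * cvar (q u) (fun _ => ()) G := fun u =>
    mul_nonneg (marg_nonneg hp U u) (cvar_nonneg (condPMF_nonneg hp U u) _ G)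
  calc ccov p U F G = ∑ u, marg p U u * ccov (q u) (fun _ => ()) F G :=
        ccov_eq_sum_marg_mul_ccov_condPMF hp F G
    _ ≤ c * ∑ u, √(marg p U u * cvar (q u) (fun _ => ()) F) *
          √(marg p U u * cvar (q u) (fun _ => ()) G) := by
        rw [Finset.mul_sum]; exact Finset.sum_le_sum fun u _ => hslice u
    _ ≤ c * (√(cvar p U F) * √(cvar p U G)) := by
        rw [cvar, cvar, ccov_eq_sum_marg_mul_ccov_condPMF hp F F,
          ccov_eq_sum_marg_mul_ccov_condPMF hp G G]
        exact mul_le_mul_of_nonneg_left (Real.sum_sqrt_mul_sqrt_le _ hF hG) hc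

lemma maxCorr0_condPMF_le_maxCorr [Fintype 𝒰] (hp : ∀ ω, 0 ≤ p ω) {u : 𝒰}
    (hu : 0 < marg p U u) : maxCorr0 (condPMF p U u) X Y ≤ maxCorr p U X Y := by
  refine maxCorr_le fun f g => ?_
  have hslice := ccov_ite_eq_marg_mul_ccov_condPMF (U := U) hp u
  calc ccorr (condPMF p U u) (fun _ => ()) (fun ω => f (X ω, ())) (fun ω => g (Y ω, ()))
      = ccorr p U (fun ω => if U ω = u then f (X ω, ()) else 0)
          (fun ω => if U ω = u then g (Y ω, ()) else 0) :=
        (ccorr_eq_of_ccov_eq_mul hu (hslice _ _) (hslice _ _) (hslice _ _)).symm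
    _ ≤ maxCorr p U X Y :=
        ccorr_le_maxCorr hp (fun xv => if xv.2 = u then f (xv.1, ()) else 0)
          (fun yv => if yv.2 = u then g (yv.1, ()) else 0)

end MaximalCorrelation

theorem maxCorr_eq_sup_condPMF_general {Ω 𝒳 𝒴 𝒰 : Type} [Fintype Ω]
    [Fintype 𝒰] (p : Ω → ℝ) (hp : IsPMF p) (X : Ω → 𝒳) (Y : Ω → 𝒴) (U : Ω → 𝒰) :
    maxCorr p U X Y =
      sSup { r | ∃ u : 𝒰, 0 < marg p U u ∧ r = maxCorr0 (condPMF p U u) X Y } := by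
  set S := { r | ∃ u : 𝒰, 0 < marg p U u ∧ r = maxCorr0 (condPMF p U u) X Y }
  have hS : BddAbove S := by
    refine ((Set.finite_range fun u => maxCorr0 (condPMF p U u) X Y).subset ?_).bddAbove
    rintro _ ⟨u, -, rfl⟩
    exact ⟨u, rfl⟩
  apply le_antisymm
  · refine maxCorr_le_of_maxCorr0_condPMF_le hp.1 ?_ fun u hu => le_csSup hS ⟨u, hu, rfl⟩
    refine Real.sSup_nonneg ?_
    rintro _ ⟨u, -, rfl⟩
    exact maxCorr_nonneg (condPMF_nonneg hp.1 U u) _ X Y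
  · refine Real.sSup_le ?_ (maxCorr_nonneg hp.1 U X Y)
    rintro _ ⟨u, hu, rfl⟩
    exact maxCorr0_condPMF_le_maxCorr hp.1 hu

/-- Alternative characterization. The conditional maximal correlation
`ρ_m(X;Y|U)` equals the maximum, over all `u` with `P_U(u) > 0`, of the unconditional
maximal correlation of `X` and `Y` computed under the conditional distribution given
`U = u`. -/
theorem maxCorr_eq_sup_condPMF {Ω 𝒳 𝒴 𝒰 : Type} [Fintype Ω] [Fintype 𝒳] [Fintype 𝒴]
    [Fintype 𝒰] (p : Ω → ℝ) (hp : IsPMF p) (X : Ω → 𝒳) (Y : Ω → 𝒴) (U : Ω → 𝒰) :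
    maxCorr p U X Y =
      sSup { r | ∃ u : 𝒰, 0 < marg p U u ∧ r = maxCorr0 (condPMF p U u) X Y } :=
  maxCorr_eq_sup_condPMF_general p hp X Y U

end GCI
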